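/- Let λ = (x_1, x_2) be a shape with at most two rows (x_1 ≥ x_2 ≥ 0), set h_1 = x_1 + x_2, h_2 = x_1 − x_2, and define t(m, h_1, h_2) = F(m+2, h_1+2)·F(m, h_2) − F(m+2, h_2)·F(m, h_1+2). Then for every m ≥ 0, O_3^*(λ, m) = Σ_{s=0}^{m} C(m, s) · t(m−s, h_1, h_2), where C denotes the binomial coefficient. -/

import Mathlib

/-- The empty shape (Ferrers diagram with no squares). -/
def emptyShape : ℕ → ℕ := fun _ => 0

/-- `f : ℕ → ℕ` represents a shape (integer partition / Ferrers diagram), recording the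
number of squares in each row (0-indexed): rows are weakly decreasing and eventually zero. -/
def IsShape (f : ℕ → ℕ) : Prop := (∀ i, f (i + 1) ≤ f i) ∧ ∃ N, f N = 0

/-- The shape `f` has at most `r` (nonzero) rows. -/
def RowsLE (r : ℕ) (f : ℕ → ℕ) : Prop := f r = 0

/-- `mu` is obtained from `lam` by adding one square in row `j` (0-indexed). -/
def AddSquareAt (j : ℕ) (lam mu : ℕ → ℕ) : Prop :=
  mu j = lam j + 1 ∧ ∀ i, i ≠ j → mu i = lam i

/-- `mu` is obtained from `lam` by adding one square. -/
def AddSquare (lam mu : ℕ → ℕ) : Prop := ∃ j, AddSquareAt j lam mu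

/-- `mu` and `lam` differ by exactly one square (added or removed). -/
def OscStep (lam mu : ℕ → ℕ) : Prop := AddSquare lam mu ∨ AddSquare mu lam

/-- `mu` is obtained from `lam` by adding one square, removing one square, or doing nothing. -/
def StarStep (lam mu : ℕ → ℕ) : Prop := mu = lam ∨ OscStep lam mu

/-- `t` encodes a `*`-tableaux of shape `lam` and length `m`, all of whose shapes have at
most `k - 1` rows: `t 0 = ∅`, `t m = lam`, consecutive shapes differ by at most one square,
and the sequence is padded by `lam` from index `m` on (so that `t` is determined by its
values `t 0, …, t m`). -/
def IsStarTab (k : ℕ) (lam : ℕ → ℕ) (m : ℕ) (t : ℕ → ℕ → ℕ) : Prop :=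
  t 0 = emptyShape ∧ (∀ i, m ≤ i → t i = lam) ∧
  (∀ i, i < m → StarStep (t i) (t (i + 1))) ∧
  ∀ i, IsShape (t i) ∧ RowsLE (k - 1) (t i)

/-- `t` encodes an oscillating tableaux: a `*`-tableaux whose consecutive shapes differ. -/
def IsOscTab (k : ℕ) (lam : ℕ → ℕ) (m : ℕ) (t : ℕ → ℕ → ℕ) : Prop :=
  IsStarTab k lam m t ∧ ∀ i, i < m → t (i + 1) ≠ t i

/-- `O_k^*(lam, m)`: the number of `*`-tableaux of shape `lam` and length `m`, all of whose
shapes have at most `k - 1` rows. -/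
noncomputable def Ostar (k : ℕ) (lam : ℕ → ℕ) (m : ℕ) : ℕ :=
  Nat.card {t : ℕ → ℕ → ℕ // IsStarTab k lam m t}

/-- `O_k^0(lam, m)`: the number of oscillating tableaux of shape `lam` and length `m`, all of
whose shapes have at most `k - 1` rows. -/
noncomputable def Oosc (k : ℕ) (lam : ℕ → ℕ) (m : ℕ) : ℕ :=
  Nat.card {t : ℕ → ℕ → ℕ // IsOscTab k lam m t}

/-- A `(+□₁, −□₁)`-pair at position `i` of a tableaux of length `m`: a square is added in the
first row and immediately removed again. -/
def PairAt (m : ℕ) (t : ℕ → ℕ → ℕ) (i : ℕ) : Prop :=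
  i + 2 ≤ m ∧ AddSquareAt 0 (t i) (t (i + 1)) ∧ t (i + 2) = t i

/-- `Q_k^*(lam, m, j)`: the number of `*`-tableaux of shape `lam` and length `m` with at most
`k - 1` rows containing exactly `j` `(+□₁, −□₁)`-pairs. -/
noncomputable def Qstar (k : ℕ) (lam : ℕ → ℕ) (m j : ℕ) : ℕ :=
  Nat.card {t : ℕ → ℕ → ℕ //
    IsStarTab k lam m t ∧ Nat.card {i : ℕ // PairAt m t i} = j}

/-- `W_k^*(lam, m)`: the number of `*`-tableaux of shape `lam` and length `m` with at most
`k - 1` rows containing no `(+□₁, −□₁)`-pair. -/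
noncomputable def Wstar (k : ℕ) (lam : ℕ → ℕ) (m : ℕ) : ℕ :=
  Nat.card {t : ℕ → ℕ → ℕ // IsStarTab k lam m t ∧ ∀ i, ¬ PairAt m t i}

/-- `M` is a partial matching on `[n] = {1, …, n}`: a set of arcs `(i, j)` with
`1 ≤ i < j ≤ n` such that every vertex lies in at most one arc. -/
def IsPartialMatching (n : ℕ) (M : Finset (ℕ × ℕ)) : Prop :=
  (∀ p ∈ M, 1 ≤ p.1 ∧ p.1 < p.2 ∧ p.2 ≤ n) ∧
  ∀ p ∈ M, ∀ q ∈ M, p ≠ q → p.1 ≠ q.1 ∧ p.1 ≠ q.2 ∧ p.2 ≠ q.1 ∧ p.2 ≠ q.2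

/-- `M` contains a `k`-crossing: arcs `(i₁,j₁), …, (i_k,j_k)` with
`i₁ < ⋯ < i_k < j₁ < ⋯ < j_k`. -/
def HasKCrossing (k : ℕ) (M : Finset (ℕ × ℕ)) : Prop :=
  ∃ a : Fin k → ℕ × ℕ, (∀ i, a i ∈ M) ∧
    (∀ i j, i < j → (a i).1 < (a j).1) ∧
    (∀ i j, i < j → (a i).2 < (a j).2) ∧
    ∀ i j, (a i).1 < (a j).2

/-- `M` is a `k`-noncrossing partial matching on `[n]`. -/
def KNoncrossingPM (k n : ℕ) (M : Finset (ℕ × ℕ)) : Prop :=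
  IsPartialMatching n M ∧ ¬ HasKCrossing k M

/-- `f_k^*(n)`: the number of `k`-noncrossing partial matchings on `[n]`. -/
noncomputable def fstar (k n : ℕ) : ℕ :=
  Nat.card {M : Finset (ℕ × ℕ) // KNoncrossingPM k n M}

/-- `M` is a matching on `[n]`: a partial matching in which every vertex lies in an arc. -/
def IsMatching (n : ℕ) (M : Finset (ℕ × ℕ)) : Prop :=
  IsPartialMatching n M ∧ ∀ v, 1 ≤ v → v ≤ n → ∃ p ∈ M, p.1 = v ∨ p.2 = v

/-- `f_k(n)`: the number of `k`-noncrossing matchings on `[n]`. -/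
noncomputable def fmatch (k n : ℕ) : ℕ :=
  Nat.card {M : Finset (ℕ × ℕ) // IsMatching n M ∧ ¬ HasKCrossing k M}

/-- `M` is a `k`-noncrossing RNA structure on `[n]`: a `k`-noncrossing partial matching
without `1`-arcs `(i, i+1)`. -/
def IsRNA (k n : ℕ) (M : Finset (ℕ × ℕ)) : Prop :=
  KNoncrossingPM k n M ∧ ∀ i, (i, i + 1) ∉ M

/-- `S_k(n)`: the number of `k`-noncrossing RNA structures on `[n]`. -/
noncomputable def Snum (k n : ℕ) : ℕ :=
  Nat.card {M : Finset (ℕ × ℕ) // IsRNA k n M}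

/-- `F(n, h)`: the number of `±1`-sequences of length `n` with all partial sums nonnegative
and total sum `h` (lattice paths from `(0,0)` to `(n,h)` staying in the first quadrant). -/
noncomputable def Fpath (n h : ℕ) : ℕ :=
  Nat.card {s : Fin n → ℤ // (∀ i, s i = 1 ∨ s i = -1) ∧
    (∀ m : ℕ, 0 ≤ ∑ i ∈ Finset.univ.filter (fun i : Fin n => (i : ℕ) < m), s i) ∧
    (∑ i, s i) = (h : ℤ)}

/-- The two-row shape `(x₁, x₂)`. -/
def twoRowShape (x1 x2 : ℕ) : ℕ → ℕ :=
  fun i => if i = 0 then x1 else if i = 1 then x2 else 0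

/-- Add one square to row `h` (0-indexed) of `f`. -/
def addRow (h : ℕ) (f : ℕ → ℕ) : ℕ → ℕ := fun i => if i = h then f i + 1 else f i

/-- Remove one square from row `h` (0-indexed) of `f`. -/
def subRow (h : ℕ) (f : ℕ → ℕ) : ℕ → ℕ := fun i => if i = h then f i - 1 else f i

/-- `V_k^*(ν, m) = W_k^*(ν, m) − W_k^*(ν⁻, m−1)`, where `ν⁻` is `ν` with one square removed
from the first row, and the second term is `0` if `ν` has an empty first row (invalid `ν⁻`). -/
noncomputable def Vstar (k : ℕ) (nu : ℕ → ℕ) (m : ℕ) : ℤ :=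
  (Wstar k nu m : ℤ) - if 0 < nu 0 then (Wstar k (subRow 0 nu) (m - 1) : ℤ) else 0

/-- The hyperbolic Bessel function of the first kind of order `r` evaluated at `2x`, as a
formal power series: `I_r(2x) = Σ_{j ≥ max(0,−r)} x^{2j+r}/(j!·(r+j)!)`. -/
noncomputable def besselI (r : ℤ) : PowerSeries ℚ :=
  PowerSeries.mk fun n =>
    if r.natAbs ≤ n ∧ (n : ℤ) % 2 = r % 2 then
      (1 : ℚ) / (((((n : ℤ) - r) / 2).toNat.factorial * ((((n : ℤ) + r) / 2).toNat.factorial) : ℕ) : ℚ)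
    else 0

/-!
In the coordinates `h₁ = x₁ + x₂`, `h₂ = x₁ - x₂` a star step moves a two-row shape by `(0, 0)`
or `(±1, ±1)`, so `O₃^*(λ, m + 1)` is the sum of `O₃^*` over the five neighbours at length `m`,
restricted to the chamber `0 ≤ h₂ ≤ h₁`. Extending `F(n, ·)` to `ℤ` antisymmetrically about `-1`
(the reflection principle) gives a function satisfying `F(n + 1, h) = F(n, h + 1) + F(n, h - 1)`
for every `h`, so the determinant `t(n, h₁, h₂)` satisfies the four-term recursion in `(h₁, h₂)`
and vanishes on the walls `h₂ = -1` and `h₂ = h₁ + 2`. The binomial sum adds the step `(0, 0)`,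
hence both sides satisfy the same recursion with the same boundary and initial values.
-/

open Finset

lemma card_subtype_eq_sum_card_fiberwise {α β : Type*} [DecidableEq β] {P : α → Prop}
    [Finite {x // P x}] (g : α → β) (S : Finset β) (hg : ∀ x, P x → g x ∈ S) :
    Nat.card {x // P x} = ∑ b ∈ S, Nat.card {x // P x ∧ g x = b} := by
  let f : {x // P x} → S := fun x => ⟨g x, hg x x.2⟩
  rw [← Nat.card_congr (Equiv.sigmaFiberEquiv f), Nat.card_sigma, ← Finset.sum_coe_sort S]
  refine Finset.sum_congr rfl fun b _ => Nat.card_congr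
    { toFun := fun x => ⟨x.1.1, x.1.2, congrArg Subtype.val x.2⟩
      invFun := fun x => ⟨⟨x.1, x.2.1⟩, Subtype.ext x.2.2⟩
      left_inv := fun _ => rfl
      right_inv := fun _ => rfl }

def IsBallotPath (n : ℕ) (h : ℤ) (s : Fin n → ℤ) : Prop :=
  (∀ i, s i = 1 ∨ s i = -1) ∧
  (∀ m : ℕ, 0 ≤ ∑ i ∈ univ.filter (fun i : Fin n => (i : ℕ) < m), s i) ∧
  ∑ i, s i = h

noncomputable def ballotCount (n : ℕ) (h : ℤ) : ℕ :=
  Nat.card {s : Fin n → ℤ // IsBallotPath n h s}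

lemma Fpath_eq_ballotCount (n h : ℕ) : Fpath n h = ballotCount n h := rfl

instance (n : ℕ) (h : ℤ) : Finite {s : Fin n → ℤ // IsBallotPath n h s} :=
  Set.Finite.to_subtype <| (Set.Finite.pi' fun _ => ({1, -1} : Set ℤ).toFinite).subset
    fun _ hs i => hs.1 i

lemma sum_filter_lt_of_le {n m : ℕ} (s : Fin n → ℤ) (hm : n ≤ m) :
    ∑ i ∈ univ.filter (fun i : Fin n => (i : ℕ) < m), s i = ∑ i, s i := by
  rw [filter_true_of_mem fun i _ => i.isLt.trans_le hm]

lemma sum_filter_lt_snoc {n : ℕ} (s : Fin n → ℤ) (c : ℤ) (m : ℕ) :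
    ∑ i ∈ univ.filter (fun i : Fin (n + 1) => (i : ℕ) < m), (Fin.snoc s c : Fin (n + 1) → ℤ) i =
      ∑ i ∈ univ.filter (fun i : Fin n => (i : ℕ) < m), s i + if n < m then c else 0 := by
  rw [sum_filter, sum_filter, Fin.sum_univ_castSucc]
  simp

lemma ballotCount_zero (h : ℤ) : ballotCount 0 h = if h = 0 then 1 else 0 := by
  have key : ∀ s : Fin 0 → ℤ, IsBallotPath 0 h s ↔ h = 0 := by
    simp [IsBallotPath, eq_comm]
  rw [ballotCount, Nat.card_congr (Equiv.subtypeEquivRight key)]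
  split_ifs <;> simp [*]

lemma ballotCount_of_neg {n : ℕ} {h : ℤ} (hh : h < 0) : ballotCount n h = 0 := by
  have : IsEmpty {s : Fin n → ℤ // IsBallotPath n h s} := ⟨fun ⟨s, _, hpre, hsum⟩ => by
    have := hpre n
    rw [sum_filter_lt_of_le s le_rfl, hsum] at this
    omega⟩
  exact Nat.card_of_isEmpty

lemma isBallotPath_snoc_iff {n : ℕ} {h c : ℤ} {s : Fin n → ℤ} (hc : c = 1 ∨ c = -1)
    (hh : 0 ≤ h) : IsBallotPath (n + 1) h (Fin.snoc s c) ↔ IsBallotPath n (h - c) s := by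
  simp only [IsBallotPath, Fin.forall_fin_succ', Fin.snoc_castSucc, Fin.snoc_last,
    sum_filter_lt_snoc, Fin.sum_univ_castSucc]
  constructor
  · rintro ⟨⟨hs, -⟩, hpre, hsum⟩
    refine ⟨hs, fun m => ?_, by linarith⟩
    rcases le_or_gt m n with hm | hm
    · simpa [not_lt.2 hm] using hpre m
    · simpa [sum_filter_lt_of_le s hm.le, sum_filter_lt_of_le s le_rfl] using hpre n
  · rintro ⟨hs, hpre, hsum⟩
    refine ⟨⟨hs, hc⟩, fun m => ?_, by linarith⟩
    split_ifs with hm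
    · rw [sum_filter_lt_of_le s hm.le]
      linarith
    · simpa using hpre m

lemma card_ballotPath_last_eq {n : ℕ} {h c : ℤ} (hc : c = 1 ∨ c = -1) (hh : 0 ≤ h) :
    Nat.card {s : Fin (n + 1) → ℤ // IsBallotPath (n + 1) h s ∧ s (Fin.last n) = c} =
      ballotCount n (h - c) :=
  Nat.card_congr
    { toFun := fun s => ⟨Fin.init s.1, (isBallotPath_snoc_iff hc hh).1 <| by
        have := s.2.1
        rwa [← Fin.snoc_init_self s.1, s.2.2] at this⟩
      invFun := fun s => ⟨Fin.snoc s.1 c, (isBallotPath_snoc_iff hc hh).2 s.2, Fin.snoc_last _ _⟩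
      left_inv := fun ⟨s, _, hlast⟩ => Subtype.ext <| hlast ▸ Fin.snoc_init_self s
      right_inv := fun _ => Subtype.ext (Fin.init_snoc (α := fun _ => ℤ) _ _) }

lemma ballotCount_succ {n : ℕ} {h : ℤ} (hh : 0 ≤ h) :
    ballotCount (n + 1) h = ballotCount n (h + 1) + ballotCount n (h - 1) := by
  rw [ballotCount, card_subtype_eq_sum_card_fiberwise (fun s => s (Fin.last n)) {-1, 1}
      fun s hs => by simpa [or_comm] using hs.1 (Fin.last n),
    sum_pair (by norm_num), card_ballotPath_last_eq (by norm_num) hh,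
    card_ballotPath_last_eq (by norm_num) hh, sub_neg_eq_add]

/-- Unlike `ballotCount`, this satisfies the path recursion also at `h = -1`. -/
noncomputable def reflBallotCount (n : ℕ) (h : ℤ) : ℤ :=
  ballotCount n h - ballotCount n (-h - 2)

lemma reflBallotCount_of_nonneg {n : ℕ} {h : ℤ} (hh : 0 ≤ h) :
    reflBallotCount n h = ballotCount n h := by
  simp [reflBallotCount, ballotCount_of_neg (by omega : -h - 2 < 0)]

lemma reflBallotCount_neg_one (n : ℕ) : reflBallotCount n (-1) = 0 := by
  norm_num [reflBallotCount]

lemma reflBallotCount_succ (n : ℕ) (h : ℤ) :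
    reflBallotCount (n + 1) h = reflBallotCount n (h + 1) + reflBallotCount n (h - 1) := by
  simp only [reflBallotCount]
  rcases lt_trichotomy h (-1) with hh | rfl | hh
  · rw [ballotCount_of_neg (by omega : h < 0), ballotCount_succ (by omega),
      ballotCount_of_neg (by omega : h + 1 < 0), ballotCount_of_neg (by omega : h - 1 < 0)]
    push_cast
    ring_nf
  · norm_num
  · rw [ballotCount_of_neg (by omega : -h - 2 < 0), ballotCount_succ (by omega : 0 ≤ h),
      ballotCount_of_neg (by omega : -(h + 1) - 2 < 0),
      ballotCount_of_neg (by omega : -(h - 1) - 2 < 0)]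
    push_cast
    ring

noncomputable def ballotDet (n : ℕ) (a b : ℤ) : ℤ :=
  reflBallotCount (n + 2) (a + 2) * reflBallotCount n b -
    reflBallotCount (n + 2) b * reflBallotCount n (a + 2)

lemma ballotDet_neg_one (n : ℕ) (a : ℤ) : ballotDet n a (-1) = 0 := by
  simp [ballotDet, reflBallotCount_neg_one]

lemma ballotDet_add_two (n : ℕ) (a : ℤ) : ballotDet n a (a + 2) = 0 := by
  rw [ballotDet, mul_comm, sub_self]

lemma ballotDet_zero {a b : ℤ} (hb : 0 ≤ b) (hba : b ≤ a) :
    ballotDet 0 a b = if a = 0 then 1 else 0 := by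
  have h0 : reflBallotCount 2 (a + 2) = if a = 0 then 1 else 0 := by
    simp only [reflBallotCount_succ 1, reflBallotCount_succ 0]
    simp only [reflBallotCount, ballotCount_zero]
    split_ifs <;> omega
  rw [ballotDet, zero_add, h0]
  simp only [reflBallotCount, ballotCount_zero]
  split_ifs <;> omega

lemma ballotDet_succ (n : ℕ) (a b : ℤ) :
    ballotDet (n + 1) a b = ballotDet n (a + 1) (b + 1) + ballotDet n (a - 1) (b - 1) +
      ballotDet n (a - 1) (b + 1) + ballotDet n (a + 1) (b - 1) := by
  simp only [ballotDet, show n + 1 + 2 = n + 2 + 1 from rfl, reflBallotCount_succ (n + 2),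
    reflBallotCount_succ n]
  ring_nf

lemma sum_range_choose_mul_succ {R : Type*} [NonAssocSemiring R] (f : ℕ → R) (m : ℕ) :
    ∑ s ∈ range (m + 2), ((m + 1).choose s : R) * f (m + 1 - s) =
      ∑ s ∈ range (m + 1), (m.choose s : R) * f (m - s) +
        ∑ s ∈ range (m + 1), (m.choose s : R) * f (m - s + 1) := by
  rw [Finset.sum_choose_succ_mul (fun _ j => f j), add_comm]
  congr 1
  refine sum_congr rfl fun s hs => ?_
  rw [Nat.sub_add_comm (Nat.lt_succ_iff.1 (mem_range.1 hs))]

noncomputable def binomBallotDet (m : ℕ) (a b : ℤ) : ℤ :=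
  ∑ s ∈ range (m + 1), (m.choose s : ℤ) * ballotDet (m - s) a b

lemma binomBallotDet_neg_one (m : ℕ) (a : ℤ) : binomBallotDet m a (-1) = 0 :=
  sum_eq_zero fun _ _ => by rw [ballotDet_neg_one, mul_zero]

lemma binomBallotDet_add_two (m : ℕ) (a : ℤ) : binomBallotDet m a (a + 2) = 0 :=
  sum_eq_zero fun _ _ => by rw [ballotDet_add_two, mul_zero]

lemma binomBallotDet_zero {a b : ℤ} (hb : 0 ≤ b) (hba : b ≤ a) :
    binomBallotDet 0 a b = if a = 0 then 1 else 0 := by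
  simp [binomBallotDet, ballotDet_zero hb hba]

lemma binomBallotDet_succ (m : ℕ) (a b : ℤ) :
    binomBallotDet (m + 1) a b = binomBallotDet m a b + binomBallotDet m (a + 1) (b + 1) +
      binomBallotDet m (a - 1) (b - 1) + binomBallotDet m (a - 1) (b + 1) +
      binomBallotDet m (a + 1) (b - 1) := by
  simp only [binomBallotDet, sum_range_choose_mul_succ (fun n => ballotDet n a b), ballotDet_succ,
    mul_add, sum_add_distrib, add_assoc]

section StarTableaux

variable {k m : ℕ} {lam mu : ℕ → ℕ} {t : ℕ → ℕ → ℕ}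

lemma IsShape.eq_zero_of_rowsLE {r j : ℕ} {f : ℕ → ℕ} (hf : IsShape f) (hr : RowsLE r f)
    (hj : r ≤ j) : f j = 0 :=
  Nat.eq_zero_of_le_zero (hr ▸ antitone_nat_of_succ_le hf.1 hj)

lemma StarStep.le_add_one (h : StarStep lam mu) (j : ℕ) : mu j ≤ lam j + 1 := by
  rcases h with rfl | ⟨i, hi, hi'⟩ | ⟨i, hi, hi'⟩
  · omega
  all_goals rcases eq_or_ne j i with rfl | hj
  all_goals first | omega | (have := hi' j hj; omega)

lemma IsStarTab.le_index (ht : IsStarTab k lam m t) {i : ℕ} (hi : i ≤ m) (j : ℕ) :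
    t i j ≤ i := by
  induction i with
  | zero => simp [ht.1, emptyShape]
  | succ i ih => exact (ht.2.2.1 i hi).le_add_one j |>.trans (by have := ih (by omega); omega)

instance (k : ℕ) (lam : ℕ → ℕ) (m : ℕ) : Finite {t : ℕ → ℕ → ℕ // IsStarTab k lam m t} := by
  refine Finite.of_injective
    (fun t (i : Fin (m + 1)) (j : Fin (k - 1)) => (⟨min (t.1 i j) m, by omega⟩ : Fin (m + 1)))
    fun t₁ t₂ h => Subtype.ext <| funext fun i => funext fun j => ?_
  rcases le_or_gt i m with hi | hi
  · rcases lt_or_ge j (k - 1) with hj | hj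
    · have := congrArg Fin.val (congrFun (congrFun h ⟨i, by omega⟩) ⟨j, hj⟩)
      have := t₁.2.le_index hi j
      have := t₂.2.le_index hi j
      simp only at *
      omega
    · rw [(t₁.2.2.2.2 i).1.eq_zero_of_rowsLE (t₁.2.2.2.2 i).2 hj,
        (t₂.2.2.2.2 i).1.eq_zero_of_rowsLE (t₂.2.2.2.2 i).2 hj]
  · rw [t₁.2.2.1 i hi.le, t₂.2.2.1 i hi.le]

lemma Ostar_emptyShape_zero (k : ℕ) : Ostar k emptyShape 0 = 1 := by
  refine Nat.card_eq_one_iff_exists.2 ⟨⟨fun _ => emptyShape, rfl, fun _ _ => rfl,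
    fun _ hi => absurd hi (Nat.not_lt_zero _), fun _ => ⟨⟨fun _ => le_rfl, 0, rfl⟩, rfl⟩⟩,
    fun t => Subtype.ext <| funext fun i => t.2.2.1 i (Nat.zero_le i)⟩

lemma Ostar_zero_of_ne (k : ℕ) (h : lam ≠ emptyShape) : Ostar k lam 0 = 0 := by
  have : IsEmpty {t // IsStarTab k lam 0 t} :=
    ⟨fun t => h ((t.2.2.1 0 le_rfl).symm.trans t.2.1)⟩
  exact Nat.card_of_isEmpty

lemma IsStarTab.truncate (ht : IsStarTab k lam (m + 1) t) :
    IsStarTab k (t m) m fun i => t (min i m) := by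
  obtain ⟨h0, -, hsteps, hshapes⟩ := ht
  refine ⟨by simpa using h0, fun i hi => by simp [min_eq_right hi], fun i hi => ?_,
    fun i => hshapes _⟩
  simpa [min_eq_left hi.le, min_eq_left (Nat.succ_le_of_lt hi)] using hsteps i (by omega)

lemma IsStarTab.extend (ht : IsStarTab k mu m t) (hlam : IsShape lam)
    (hr : RowsLE (k - 1) lam) (hstep : StarStep mu lam) :
    IsStarTab k lam (m + 1) fun i => if i ≤ m then t i else lam := by
  obtain ⟨h0, hpad, hsteps, hshapes⟩ := ht
  refine ⟨by simpa using h0, fun i hi => by simp [show ¬ i ≤ m by omega], fun i hi => ?_,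
    fun i => ?_⟩
  · rcases Nat.lt_succ_iff_lt_or_eq.1 hi with hi | rfl
    · simpa [hi.le, Nat.succ_le_of_lt hi] using hsteps i hi
    · simpa [hpad i le_rfl] using hstep
  · dsimp only
    split_ifs
    exacts [hshapes i, ⟨hlam, hr⟩]

lemma card_starTab_succ_last_eq (hlam : IsShape lam) (hr : RowsLE (k - 1) lam)
    (hstep : StarStep mu lam) :
    Nat.card {t : ℕ → ℕ → ℕ // IsStarTab k lam (m + 1) t ∧ t m = mu} = Ostar k mu m :=
  Nat.card_congr
    { toFun := fun t => ⟨fun i => t.1 (min i m), by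
        have := t.2.1.truncate; rwa [t.2.2] at this⟩
      invFun := fun t => ⟨fun i => if i ≤ m then t.1 i else lam,
        t.2.extend hlam hr hstep, by simp [t.2.2.1 m le_rfl]⟩
      left_inv := fun t => Subtype.ext <| funext fun i => by
        by_cases hi : i ≤ m
        · simp [hi]
        · simp [hi, t.2.1.2.1 i (by omega)]
      right_inv := fun t => Subtype.ext <| funext fun i => by
        by_cases hi : i ≤ m
        · simp [hi]
        · simp [min_eq_right (le_of_not_ge hi), t.2.2.1 i (le_of_not_ge hi), t.2.2.1 m le_rfl] }

end StarTableaux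

lemma twoRowShape_of_two_le {a b j : ℕ} (hj : 2 ≤ j) : twoRowShape a b j = 0 := by
  simp only [twoRowShape]
  split_ifs <;> omega

lemma isShape_twoRowShape {a b : ℕ} (hba : b ≤ a) : IsShape (twoRowShape a b) :=
  ⟨fun i => by rcases i with _ | _ | i <;> simp [twoRowShape, hba], 2, rfl⟩

lemma rowsLE_twoRowShape (a b : ℕ) : RowsLE 2 (twoRowShape a b) := rfl

lemma twoRowShape_inj {a b a' b' : ℕ} :
    twoRowShape a b = twoRowShape a' b' ↔ a = a' ∧ b = b' := by
  refine ⟨fun h => ⟨congrFun h 0, congrFun h 1⟩, fun ⟨ha, hb⟩ => ha ▸ hb ▸ rfl⟩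

lemma twoRowShape_eq_emptyShape_iff {a b : ℕ} :
    twoRowShape a b = emptyShape ↔ a = 0 ∧ b = 0 := by
  rw [show emptyShape = twoRowShape 0 0 from funext fun _ => by simp [twoRowShape, emptyShape],
    twoRowShape_inj]

lemma IsShape.eq_twoRowShape {f : ℕ → ℕ} (hf : IsShape f) (hr : RowsLE 2 f) :
    f = twoRowShape (f 0) (f 1) :=
  funext fun j => by
    rcases j with _ | _ | j
    · rfl
    · rfl
    · rw [twoRowShape_of_two_le (by omega), hf.eq_zero_of_rowsLE hr (by omega)]

def rowSteps : Finset (ℤ × ℤ) := {(0, 0), (1, 0), (-1, 0), (0, 1), (0, -1)}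

lemma sum_rowSteps {M : Type*} [AddCommMonoid M] (f : ℤ × ℤ → M) :
    ∑ d ∈ rowSteps, f d = f (0, 0) + f (1, 0) + f (-1, 0) + f (0, 1) + f (0, -1) := by
  simp [rowSteps, add_assoc]

lemma starStep_twoRowShape_iff {mu : ℕ → ℕ} {a b : ℕ} (hmu : ∀ j, 2 ≤ j → mu j = 0) :
    StarStep mu (twoRowShape a b) ↔ ((mu 0 : ℤ) - a, (mu 1 : ℤ) - b) ∈ rowSteps := by
  simp only [rowSteps, mem_insert, mem_singleton, Prod.mk.injEq]
  constructor
  · rintro (h | ⟨j, hj, hj'⟩ | ⟨j, hj, hj'⟩)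
    · simp [← h, twoRowShape]
    all_goals
      rcases j with _ | _ | j
      · have := hj' 1 one_ne_zero
        simp [twoRowShape] at hj this
        omega
      · have := hj' 0 zero_ne_one
        simp [twoRowShape] at hj this
        omega
      · simp [twoRowShape, hmu] at hj
  · have hrow : ∀ i, mu (i + 2) = twoRowShape a b (i + 2) := fun i => by
      rw [hmu _ (by omega), twoRowShape_of_two_le (by omega)]
    rintro (⟨h0, h1⟩ | ⟨h0, h1⟩ | ⟨h0, h1⟩ | ⟨h0, h1⟩ | ⟨h0, h1⟩)
    · exact Or.inl <| funext fun i => by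
        rcases i with _ | _ | i <;> simp [twoRowShape, hrow] at * <;> omega
    · exact Or.inr <| Or.inr ⟨0, by simp [twoRowShape]; omega, fun i hi => by
        rcases i with _ | _ | i <;> simp [twoRowShape, hrow] at *
        omega⟩
    · exact Or.inr <| Or.inl ⟨0, by simp [twoRowShape]; omega, fun i hi => by
        rcases i with _ | _ | i <;> simp [twoRowShape, hrow] at *
        omega⟩
    · exact Or.inr <| Or.inr ⟨1, by simp [twoRowShape]; omega, fun i hi => by
        rcases i with _ | _ | i <;> simp [twoRowShape, hrow] at *
        omega⟩
    · exact Or.inr <| Or.inl ⟨1, by simp [twoRowShape]; omega, fun i hi => by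
        rcases i with _ | _ | i <;> simp [twoRowShape, hrow] at *
        omega⟩

noncomputable def twoRowOstar (m : ℕ) (x y : ℤ) : ℕ :=
  if 0 ≤ y ∧ y ≤ x then Ostar 3 (twoRowShape x.toNat y.toNat) m else 0

lemma card_starTab_succ_rowStep {a b : ℕ} (hba : b ≤ a) (m : ℕ) {d : ℤ × ℤ}
    (hd : d ∈ rowSteps) :
    Nat.card {t : ℕ → ℕ → ℕ // IsStarTab 3 (twoRowShape a b) (m + 1) t ∧
        ((t m 0 : ℤ) - a, (t m 1 : ℤ) - b) = d} = twoRowOstar m (a + d.1) (b + d.2) := by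
  rw [twoRowOstar]
  split_ifs with hv
  · have hstep : StarStep (twoRowShape (a + d.1).toNat (b + d.2).toNat) (twoRowShape a b) :=
      (starStep_twoRowShape_iff fun j hj => twoRowShape_of_two_le hj).2 <| by
        simpa [twoRowShape, Int.toNat_of_nonneg hv.1, Int.toNat_of_nonneg (hv.1.trans hv.2)]
          using hd
    rw [← card_starTab_succ_last_eq (isShape_twoRowShape hba) (rowsLE_twoRowShape a b) hstep]
    refine Nat.card_congr (Equiv.subtypeEquivRight fun t => and_congr_right fun ht => ?_)
    obtain ⟨hshape, hrows⟩ := ht.2.2.2 m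
    conv_rhs => rw [hshape.eq_twoRowShape hrows, twoRowShape_inj]
    rw [Prod.ext_iff]
    omega
  · have : IsEmpty {t : ℕ → ℕ → ℕ // IsStarTab 3 (twoRowShape a b) (m + 1) t ∧
        ((t m 0 : ℤ) - a, (t m 1 : ℤ) - b) = d} := ⟨fun ⟨t, ht, htd⟩ => hv <| by
      have := (ht.2.2.2 m).1.1 0
      rw [← htd, zero_add] at *
      omega⟩
    exact Nat.card_of_isEmpty

lemma twoRowOstar_succ (m : ℕ) {x y : ℤ} (hy : 0 ≤ y) (hyx : y ≤ x) :
    twoRowOstar (m + 1) x y = ∑ d ∈ rowSteps, twoRowOstar m (x + d.1) (y + d.2) := by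
  lift x to ℕ using hy.trans hyx
  lift y to ℕ using hy
  rw [twoRowOstar, if_pos (by omega), Int.toNat_natCast, Int.toNat_natCast, Ostar,
    card_subtype_eq_sum_card_fiberwise _ rowSteps fun t ht => ?_]
  · exact sum_congr rfl fun d hd => card_starTab_succ_rowStep (by omega) m hd
  · refine (starStep_twoRowShape_iff fun j hj => ?_).1 ?_
    · exact (ht.2.2.2 m).1.eq_zero_of_rowsLE (ht.2.2.2 m).2 hj
    · simpa [ht.2.1 (m + 1) le_rfl] using ht.2.2.1 m (Nat.lt_succ_self m)

lemma twoRowOstar_zero {x y : ℤ} (hy : 0 ≤ y) (hyx : y ≤ x) :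
    twoRowOstar 0 x y = if x = 0 then 1 else 0 := by
  rw [twoRowOstar, if_pos ⟨hy, hyx⟩]
  split_ifs with hx
  · rw [show twoRowShape x.toNat y.toNat = emptyShape by
      rw [twoRowShape_eq_emptyShape_iff]; omega, Ostar_emptyShape_zero]
  · exact Ostar_zero_of_ne 3 fun h => hx (by rw [twoRowShape_eq_emptyShape_iff] at h; omega)

lemma twoRowOstar_eq_binomBallotDet_of_boundary (m : ℕ) {x y : ℤ} (hb : y = -1 ∨ y = x + 1) :
    (twoRowOstar m x y : ℤ) = binomBallotDet m (x + y) (x - y) := by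
  rw [twoRowOstar, if_neg (by omega)]
  rcases hb with rfl | rfl
  · rw [show x - -1 = x + -1 + 2 by ring, binomBallotDet_add_two, Nat.cast_zero]
  · rw [show x - (x + 1) = -1 by ring, binomBallotDet_neg_one, Nat.cast_zero]

/-- The strip `-1 ≤ y ≤ x + 1` adds to the chamber its walls, where both sides vanish; it
contains all neighbours of chamber points, as the induction step requires. -/
lemma twoRowOstar_eq_binomBallotDet (m : ℕ) {x y : ℤ} (hy : -1 ≤ y) (hyx : y ≤ x + 1) :
    (twoRowOstar m x y : ℤ) = binomBallotDet m (x + y) (x - y) := by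
  induction m generalizing x y with
  | zero =>
    obtain hv | hb := (by omega : (0 ≤ y ∧ y ≤ x) ∨ y = -1 ∨ y = x + 1)
    · rw [twoRowOstar_zero hv.1 hv.2, binomBallotDet_zero (by omega) (by omega)]
      split_ifs <;> first | rfl | omega
    · exact twoRowOstar_eq_binomBallotDet_of_boundary 0 hb
  | succ m ih =>
    obtain hv | hb := (by omega : (0 ≤ y ∧ y ≤ x) ∨ y = -1 ∨ y = x + 1)
    · rw [twoRowOstar_succ m hv.1 hv.2, binomBallotDet_succ]
      push_cast [sum_rowSteps]
      rw [ih, ih, ih, ih, ih]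
      · ring_nf
      all_goals omega
    · exact twoRowOstar_eq_binomBallotDet_of_boundary (m + 1) hb

/-- for a two-row shape `λ = (x₁, x₂)`, with `h₁ = x₁ + x₂`, `h₂ = x₁ − x₂` and
`t(m, h₁, h₂) = F(m+2, h₁+2)·F(m, h₂) − F(m+2, h₂)·F(m, h₁+2)`,
`O_3^*(λ, m) = Σ_{s=0}^{m} C(m, s) · t(m−s, h₁, h₂)`. -/
theorem Ostar_three_formula (x1 x2 : ℕ) (hx : x2 ≤ x1) (m : ℕ) :
    (Ostar 3 (twoRowShape x1 x2) m : ℤ) =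
      ∑ s ∈ Finset.range (m + 1), (m.choose s : ℤ) *
        ((Fpath (m - s + 2) (x1 + x2 + 2) : ℤ) * (Fpath (m - s) (x1 - x2) : ℤ)
          - (Fpath (m - s + 2) (x1 - x2) : ℤ) * (Fpath (m - s) (x1 + x2 + 2) : ℤ)) := by
  have h := twoRowOstar_eq_binomBallotDet m (x := x1) (y := x2) (by omega) (by omega)
  rw [twoRowOstar, if_pos (by omega), Int.toNat_natCast, Int.toNat_natCast] at h
  rw [h, binomBallotDet]
  refine sum_congr rfl fun s _ => ?_
  simp only [ballotDet, Fpath_eq_ballotCount]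
  rw [reflBallotCount_of_nonneg (by omega), reflBallotCount_of_nonneg (by omega),
    reflBallotCount_of_nonneg (by omega), reflBallotCount_of_nonneg (by omega)]
  push_cast [Nat.cast_sub hx]
  rfl
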